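/- arXiv:1908.08896 — 5 statements merged into one kernel-verified Lean document; each statement's English description precedes it below -/
import Mathlib

section
/- Let k be a field of characteristic 0. The monomial xyz ∈ k[x,y,z] cannot be written as a linear combination of 3 or fewer cubes of linear forms; that is, there do not exist scalars c₁,c₂,c₃ ∈ k and linear forms ℓ₁,ℓ₂,ℓ₃ ∈ k[x,y,z] with xyz = c₁ℓ₁³ + c₂ℓ₂³ + c₃ℓ₃³. Hence the Waring rank of xyz is 4. -/
open MvPolynomial

/-- The linear form with coefficient vector `a`. -/
noncomputable def linForm {k : Type*} [CommRing k] {n : Type*} [Fintype n]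
    (a : n → k) : MvPolynomial n k :=
  ∑ i, C (a i) * X i

/-!
If `xyz = ∑ cᵢ ℓᵢ³` with three linear forms, differentiating puts the three partials `yz, xz, xy`
in the span of the three squares `ℓᵢ²`. The partials are linearly independent, so the two spans
coincide and every `ℓᵢ²` is a quadratic form without square terms. Such a form vanishes at the
standard basis vectors, whereas `ℓᵢ²` takes the squares of the coefficients of `ℓᵢ` there; hence every `ℓᵢ` is zero,
which is absurd. Four cubes suffice by the polarization identity
`24 xyz = (x+y+z)³ - (x+y-z)³ - (x-y+z)³ + (x-y-z)³`.
-/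

open Submodule Set

theorem LinearIndependent.span_range_eq_of_le {K V ι : Type*} [DivisionRing K] [AddCommGroup V]
    [Module K V] [Fintype ι] {v w : ι → V} (hv : LinearIndependent K v)
    (hle : span K (range v) ≤ span K (range w)) : span K (range v) = span K (range w) :=
  have := FiniteDimensional.span_of_finite K (finite_range w)
  eq_of_le_of_finrank_le hle ((finrank_range_le_card w).trans (finrank_span_eq_card hv).ge)

section LinForm

variable {k σ : Type*} [CommRing k] [Fintype σ]

@[simp]
theorem pderiv_linForm (a : σ → k) (j : σ) : pderiv j (linForm a) = C (a j) := by
  classical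
  simp [linForm, pderiv_X, Pi.single_apply]

theorem eval_linForm (a x : σ → k) : eval x (linForm a) = ∑ i, a i * x i := by
  simp [linForm]

theorem pderiv_sum_C_mul_linForm_pow_mem_span {ι : Type*} [Fintype ι] (c : ι → k)
    (a : ι → σ → k) (d : ℕ) (j : σ) :
    pderiv j (∑ i, C (c i) * linForm (a i) ^ (d + 1)) ∈
      span k (range fun i ↦ linForm (a i) ^ d) := by
  rw [map_sum]
  refine sum_mem fun i _ ↦ ?_
  have hterm : pderiv j (C (c i) * linForm (a i) ^ (d + 1)) =
      (c i * (d + 1) * a i j) • linForm (a i) ^ d := by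
    simp only [pderiv_C_mul, pderiv_pow, pderiv_linForm, smul_eq_C_mul, map_mul, map_add,
      map_natCast, map_one, Nat.cast_add, Nat.cast_one, add_tsub_cancel_right]
    ring
  exact hterm ▸ smul_mem _ _ (subset_span ⟨i, rfl⟩)

end LinForm

noncomputable def squarefreeQuadrics (σ k : Type*) [CommRing k] : Submodule k (MvPolynomial σ k) :=
  span k {q | ∃ i j, i ≠ j ∧ q = X i * X j}

theorem eval_single_eq_zero_of_mem_squarefreeQuadrics {k σ : Type*} [CommRing k] [DecidableEq σ]
    {p : MvPolynomial σ k} (hp : p ∈ squarefreeQuadrics σ k) (m : σ) :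
    eval (Pi.single m 1) p = 0 := by
  suffices squarefreeQuadrics σ k ≤ LinearMap.ker (aeval (Pi.single m (1 : k))).toLinearMap by
    simpa [coe_aeval_eq_eval] using this hp
  refine span_le.mpr ?_
  rintro _ ⟨i, j, hij, rfl⟩
  by_cases him : i = m
  · subst him; simp [Ne.symm hij]
  · simp [Pi.single_apply, him]

theorem eq_zero_of_linForm_pow_mem_squarefreeQuadrics {k σ : Type*} [CommRing k] [IsDomain k]
    [Fintype σ] [DecidableEq σ] {a : σ → k} {d : ℕ} (hd : d ≠ 0)
    (h : linForm a ^ d ∈ squarefreeQuadrics σ k) : a = 0 := by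
  funext m
  have := eval_single_eq_zero_of_mem_squarefreeQuadrics h m
  simpa [eval_linForm, Pi.single_apply, hd] using this

section XYZ

variable {k : Type*} [Field k]

theorem pderiv_X_mul_X_mul_X :
    (fun j ↦ pderiv j (X 0 * X 1 * X 2 : MvPolynomial (Fin 3) k)) =
      ![X 1 * X 2, X 0 * X 2, X 0 * X 1] := by
  funext j
  fin_cases j <;> simp [mul_comm]

theorem linearIndependent_X_mul_X :
    LinearIndependent k ![(X 1 * X 2 : MvPolynomial (Fin 3) k), X 0 * X 2, X 0 * X 1] := by
  rw [Fintype.linearIndependent_iff]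
  intro g hg
  have hval (x : Fin 3 → k) := congrArg (eval x) hg
  simp only [Fin.sum_univ_three] at hval
  intro i
  fin_cases i
  · simpa using hval ![0, 1, 1]
  · simpa using hval ![1, 0, 1]
  · simpa using hval ![1, 1, 0]

theorem span_X_mul_X_le_squarefreeQuadrics :
    span k (range ![(X 1 * X 2 : MvPolynomial (Fin 3) k), X 0 * X 2, X 0 * X 1]) ≤
      squarefreeQuadrics (Fin 3) k := by
  refine span_le.mpr (range_subset_iff.mpr fun j ↦ subset_span ?_)
  fin_cases j
  exacts [⟨1, 2, by decide, rfl⟩, ⟨0, 2, by decide, rfl⟩, ⟨0, 1, by decide, rfl⟩]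

theorem X_mul_X_mul_X_eq_sum_four_cubes (h24 : (24 : k) ≠ 0) :
    (X 0 * X 1 * X 2 : MvPolynomial (Fin 3) k) =
      ∑ i, C (![24⁻¹, -24⁻¹, -24⁻¹, 24⁻¹] i) *
        linForm (![![1, 1, 1], ![1, 1, -1], ![1, -1, 1], ![1, -1, -1]] i) ^ 3 := by
  have hC : (C (24⁻¹ : k) : MvPolynomial (Fin 3) k) * 24 = 1 := by
    rw [← map_ofNat C, ← C_mul, inv_mul_cancel₀ h24, C_1]
  simp only [linForm, Fin.sum_univ_three, Fin.sum_univ_four, Matrix.cons_val, map_neg, C_1]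
  linear_combination (-(X 0) * X 1 * X 2 : MvPolynomial (Fin 3) k) * hC

end XYZ

/-- Over a field of characteristic 0, the monomial `xyz` is not a linear combination of 3
(or fewer) cubes of linear forms, but it is a linear combination of 4 cubes of linear forms;
hence its Waring rank is 4. -/
theorem waring_rank_xyz_eq_four (k : Type*) [Field k] [CharZero k] :
    (¬ ∃ (c : Fin 3 → k) (a : Fin 3 → Fin 3 → k),
        (X 0 * X 1 * X 2 : MvPolynomial (Fin 3) k) = ∑ i, C (c i) * linForm (a i) ^ 3) ∧
    (∃ (c : Fin 4 → k) (a : Fin 4 → Fin 3 → k),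
        (X 0 * X 1 * X 2 : MvPolynomial (Fin 3) k) = ∑ i, C (c i) * linForm (a i) ^ 3) := by
  refine ⟨?_, ⟨_, _, X_mul_X_mul_X_eq_sum_four_cubes (by norm_num)⟩⟩
  rintro ⟨c, a, h⟩
  have hle : span k (range ![(X 1 * X 2 : MvPolynomial (Fin 3) k), X 0 * X 2, X 0 * X 1]) ≤
      span k (range fun i ↦ linForm (a i) ^ 2) := by
    rw [← pderiv_X_mul_X_mul_X, span_le, range_subset_iff]
    intro j
    rw [h]
    exact pderiv_sum_C_mul_linForm_pow_mem_span c a 2 j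
  have ha (i : Fin 3) : a i = 0 := by
    refine eq_zero_of_linForm_pow_mem_squarefreeQuadrics two_ne_zero
      (span_X_mul_X_le_squarefreeQuadrics ?_)
    rw [linearIndependent_X_mul_X.span_range_eq_of_le hle]
    exact subset_span ⟨i, rfl⟩
  have hxyz : (X 0 * X 1 * X 2 : MvPolynomial (Fin 3) k) ≠ 0 := by simp [X_ne_zero]
  exact hxyz (h.trans (by simp [ha, linForm]))
end

section
/- Let k be a field of characteristic 0 and d ≥ 2. The apolar ideal det_d^⊥ ⊆ k[y_{1,1},…,y_{d,d}] of the generic d×d determinant det_d is generated by the following quadrics: (1) y_{i,j}² for all 1 ≤ i,j ≤ d; (2) y_{i,j₁} y_{i,j₂} for all i and j₁ ≠ j₂ (products of two entries from the same row); (3) y_{i₁,j} y_{i₂,j} for all j and i₁ ≠ i₂ (products of two entries from the same column); and (4) y_{i,j} y_{k,l} + y_{i,l} y_{k,j} for all i ≠ k, j ≠ l (permanents of 2×2 submatrices of Y = (y_{i,j})). -/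
/-!
Modulo the ideal `I` of the quadrics, a monomial `y^a` either vanishes or `a` is a partial
permutation matrix, and the permanent relations `y_{ij} y_{kl} ≡ -y_{il} y_{kj}` turn it into `±`
the order-preserving partial permutation with the same row set `R` and column set `C`.
These normal forms act on `det` independently: if `x^m` is a term of `det` with `a ≤ m`, then
`y^a ∘ det` has coefficient `±1` at `x^(m - a)`, and no other normal form reaches that monomial,
since the rows and columns occupied by `m - a` are the complements of `R` and `C`.
Hence `det^⊥ = I`.
-/

open MvPolynomial

/-- The generic d×d determinant, a form of degree `d` in the `d²` variables `x_{i,j}`. -/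
noncomputable def detd (k : Type*) [CommRing k] (d : ℕ) : MvPolynomial (Fin d × Fin d) k :=
  Matrix.det (Matrix.of fun i j : Fin d => X (i, j))

/-- The apolarity action: `diffAction θ F` is the result `θ ∘ F` of applying the
constant-coefficient differential operator obtained from `θ` by substituting
`y_{i,j} ↦ ∂/∂x_{i,j}` to the polynomial `F`. -/
noncomputable def diffAction {k : Type*} [CommSemiring k] {σ : Type*}
    (θ F : MvPolynomial σ k) : MvPolynomial σ k :=
  ∑ a ∈ θ.support, ∑ b ∈ F.support,
    monomial (b - a) (θ.coeff a * F.coeff b * ∏ i ∈ a.support, ((b i).descFactorial (a i) : k))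

open Function Equiv Equiv.Perm

section Apolarity

variable {k σ : Type*} [CommSemiring k]

/-- `∂^a x^b = descFactorialProd a b • x^(b - a)`. -/
def descFactorialProd (a b : σ →₀ ℕ) : ℕ :=
  a.prod fun i n => (b i).descFactorial n

theorem descFactorialProd_eq_zero_of_not_le {a b : σ →₀ ℕ} (h : ¬ a ≤ b) :
    descFactorialProd a b = 0 := by
  obtain ⟨i, hi⟩ : ∃ i, b i < a i := by simpa [Finsupp.le_def] using h
  exact Finset.prod_eq_zero (Finsupp.mem_support_iff.mpr (by omega))
    (Nat.descFactorial_eq_zero_iff_lt.mpr hi)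

theorem descFactorialProd_eq_one {a b : σ →₀ ℕ} (hab : a ≤ b) (hb : ∀ i, b i ≤ 1) :
    descFactorialProd a b = 1 :=
  Finset.prod_eq_one fun i _ => by
    have := hab i
    have := hb i
    obtain h | h : a i = 0 ∨ a i = 1 := by omega
    · simp [h]
    · simp only [h, Nat.descFactorial_one]
      omega

theorem descFactorialProd_mul_descFactorialProd (w a a' : σ →₀ ℕ) :
    descFactorialProd a (w + a) * descFactorialProd a' (w + a + a') =
      descFactorialProd (a + a') (w + a + a') := by
  classical
  have hs := Finset.subset_union_left (s₁ := a.support) (s₂ := a'.support)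
  have hs' := Finset.subset_union_right (s₁ := a.support) (s₂ := a'.support)
  simp only [descFactorialProd]
  rw [Finsupp.prod_of_support_subset _ hs _ (fun _ _ => rfl),
    Finsupp.prod_of_support_subset _ hs' _ (fun _ _ => rfl),
    Finsupp.prod_of_support_subset _ Finsupp.support_add _ (fun _ _ => rfl),
    ← Finset.prod_mul_distrib]
  refine Finset.prod_congr rfl fun i _ => ?_
  have := Nat.descFactorial_mul_descFactorial (n := w i + a i + a' i)
    (Nat.le_add_left (a' i) (a i))
  simp only [Finsupp.add_apply, Nat.add_sub_cancel] at this ⊢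
  rw [← this]

theorem coeff_diffAction (θ F : MvPolynomial σ k) (w : σ →₀ ℕ) :
    coeff w (diffAction θ F) =
      ∑ a ∈ θ.support, θ.coeff a * F.coeff (w + a) * descFactorialProd a (w + a) := by
  classical
  simp only [diffAction, coeff_sum, coeff_monomial, descFactorialProd, Finsupp.prod,
    Nat.cast_prod]
  refine Finset.sum_congr rfl fun a _ => ?_
  rw [Finset.sum_eq_single (w + a)]
  · rw [if_pos (add_tsub_cancel_right w a)]
  · intro b _ hb
    split_ifs with h
    · have hab : ¬ a ≤ b := fun hab => hb (by rw [← h, tsub_add_cancel_of_le hab])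
      have := descFactorialProd_eq_zero_of_not_le hab
      simp only [descFactorialProd, Finsupp.prod] at this
      rw [← Nat.cast_prod, this, Nat.cast_zero, mul_zero]
    · rfl
  · intro h
    simp [MvPolynomial.notMem_support_iff.mp h]

theorem coeff_diffAction_monomial (a w : σ →₀ ℕ) (c : k) (F : MvPolynomial σ k) :
    coeff w (diffAction (monomial a c) F) = c * F.coeff (w + a) * descFactorialProd a (w + a) := by
  classical
  rw [coeff_diffAction, Finset.sum_eq_single a (fun b _ hb => by simp [coeff_monomial, Ne.symm hb])
    (fun ha => by simp [notMem_support_iff.mp ha]), coeff_monomial, if_pos rfl]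

theorem diffAction_add_left (θ θ' F : MvPolynomial σ k) :
    diffAction (θ + θ') F = diffAction θ F + diffAction θ' F := by
  ext w
  rw [coeff_add, coeff_diffAction, coeff_diffAction, coeff_diffAction]
  simp only [← sum_def (b := fun a c => c * F.coeff (w + a) * (descFactorialProd a (w + a) : k))]
  rw [AddMonoidAlgebra.coeff_add]
  exact Finsupp.sum_add_index' (fun _ => by simp) (fun _ _ _ => by ring)

theorem diffAction_zero_left (F : MvPolynomial σ k) : diffAction 0 F = 0 := by
  ext w; simp [coeff_diffAction]

theorem diffAction_zero_right (θ : MvPolynomial σ k) : diffAction θ 0 = 0 := by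
  ext w; simp [coeff_diffAction]

theorem diffAction_add_right (θ F G : MvPolynomial σ k) :
    diffAction θ (F + G) = diffAction θ F + diffAction θ G := by
  ext w
  simp only [coeff_add, coeff_diffAction, mul_add, add_mul, Finset.sum_add_distrib]

theorem diffAction_mul (θ η F : MvPolynomial σ k) :
    diffAction (θ * η) F = diffAction θ (diffAction η F) := by
  induction θ using MvPolynomial.induction_on' with
  | add p q hp hq => rw [add_mul, diffAction_add_left, diffAction_add_left, hp, hq]
  | monomial a c =>
    induction η using MvPolynomial.induction_on' with
    | add p q hp hq =>
      rw [mul_add, diffAction_add_left, diffAction_add_left, hp, hq, diffAction_add_right]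
    | monomial a' c' =>
      ext w
      rw [monomial_mul, coeff_diffAction_monomial, coeff_diffAction_monomial,
        coeff_diffAction_monomial, ← add_assoc, ← descFactorialProd_mul_descFactorialProd]
      push_cast
      ring

def apolarIdeal (F : MvPolynomial σ k) : Ideal (MvPolynomial σ k) where
  carrier := {θ | diffAction θ F = 0}
  add_mem' {θ θ'} h h' := by simp_all [diffAction_add_left]
  zero_mem' := diffAction_zero_left F
  smul_mem' θ η h := by simp_all [diffAction_mul, diffAction_zero_right]

theorem mem_apolarIdeal {F θ : MvPolynomial σ k} : θ ∈ apolarIdeal F ↔ diffAction θ F = 0 :=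
  Iff.rfl

theorem coeff_mul_descFactorialProd_of_squarefree {F : MvPolynomial σ k}
    (hF : ∀ b ∈ F.support, ∀ i, b i ≤ 1) (w a : σ →₀ ℕ) :
    F.coeff (w + a) * descFactorialProd a (w + a) = F.coeff (w + a) := by
  by_cases h : F.coeff (w + a) = 0
  · simp [h]
  · rw [descFactorialProd_eq_one le_add_self (hF _ (mem_support_iff.mpr h)), Nat.cast_one, mul_one]

theorem coeff_diffAction_of_squarefree {F : MvPolynomial σ k}
    (hF : ∀ b ∈ F.support, ∀ i, b i ≤ 1) (θ : MvPolynomial σ k) (w : σ →₀ ℕ) :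
    coeff w (diffAction θ F) = ∑ a ∈ θ.support, θ.coeff a * F.coeff (w + a) := by
  simp_rw [coeff_diffAction, mul_assoc, coeff_mul_descFactorialProd_of_squarefree hF]

theorem coeff_diffAction_monomial_of_squarefree {F : MvPolynomial σ k}
    (hF : ∀ b ∈ F.support, ∀ i, b i ≤ 1) (a w : σ →₀ ℕ) (c : k) :
    coeff w (diffAction (monomial a c) F) = c * F.coeff (w + a) := by
  rw [coeff_diffAction_monomial, mul_assoc, coeff_mul_descFactorialProd_of_squarefree hF]

theorem X_mul_X_eq_monomial {σ : Type*} (p q : σ) :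
    (X p * X q : MvPolynomial σ k) = monomial (Finsupp.single p 1 + Finsupp.single q 1) 1 := by
  rw [X, X, monomial_mul, one_mul]

theorem monomial_mem_of_le {σ : Type*} {I : Ideal (MvPolynomial σ k)} {s a : σ →₀ ℕ}
    (hs : monomial s (1 : k) ∈ I) (h : s ≤ a) : monomial a (1 : k) ∈ I := by
  rw [← add_tsub_cancel_of_le h, ← one_mul (1 : k), ← monomial_mul]
  exact I.mul_mem_right _ hs

end Apolarity

section Combinatorics

variable {ι ι' : Type*} [Fintype ι] [Fintype ι']

theorem single_add_single_le {σ : Type*} {p q : σ} {a : σ →₀ ℕ} (hpq : p ≠ q) (hp : a p ≠ 0)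
    (hq : a q ≠ 0) : Finsupp.single p 1 + Finsupp.single q 1 ≤ a := by
  classical
  intro x
  simp only [Finsupp.add_apply, Finsupp.single_apply]
  split_ifs <;> subst_vars <;> first | omega | exact absurd rfl hpq

theorem mem_range_iff_sum_single_apply_ne_zero {α : Type*} (f : ι → α) (x : α) :
    x ∈ Set.range f ↔ (∑ m, Finsupp.single (f m) 1 : α →₀ ℕ) x ≠ 0 := by
  classical
  simp [Finsupp.finsetSum_apply, Finsupp.single_apply]

theorem range_eq_of_sum_single_eq {α : Type*} {f : ι → α} {g : ι' → α}
    (h : ∑ m, Finsupp.single (f m) 1 = ∑ m, Finsupp.single (g m) (1 : ℕ)) :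
    Set.range f = Set.range g := by
  ext x
  rw [mem_range_iff_sum_single_apply_ne_zero, mem_range_iff_sum_single_apply_ne_zero, h]

theorem exists_perm_strictMono_comp {n : ℕ} {α : Type*} [LinearOrder α] {f : Fin n → α}
    (hf : Injective f) : ∃ π : Perm (Fin n), StrictMono (f ∘ π) :=
  ⟨Tuple.sort f, (Tuple.monotone_sort f).strictMono_of_injective (hf.comp (Tuple.sort f).injective)⟩

end Combinatorics

section Matching

variable {d : ℕ} {ι ι' : Type*} [Fintype ι] [Fintype ι']

/-- The exponent of `∏ m, y_{r m, c m}`. For injective `r` and `c` it is a partial permutation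
matrix; the terms of `det` are the `x^(matchingExp σ id)`. -/
noncomputable def matchingExp (r c : ι → Fin d) : (Fin d × Fin d) →₀ ℕ :=
  ∑ m, Finsupp.single (r m, c m) 1

theorem matchingExp_comp_equiv (r c : ι → Fin d) (α : ι' ≃ ι) :
    matchingExp (r ∘ α) (c ∘ α) = matchingExp r c :=
  α.sum_comp fun m => Finsupp.single (r m, c m) 1

theorem matchingExp_apply_mk {r c : ι → Fin d} (hc : Injective c) (i : Fin d) (m : ι) :
    matchingExp r c (i, c m) = if r m = i then 1 else 0 := by
  classical
  rw [matchingExp, Finsupp.finsetSum_apply, Finset.sum_eq_single m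
    (fun m' _ hm' => by simp [hc.ne hm']) (by simp)]
  simp [Finsupp.single_apply]

theorem matchingExp_apply_of_notMem_range {r c : ι → Fin d} {j : Fin d} (hj : j ∉ Set.range c)
    (i : Fin d) : matchingExp r c (i, j) = 0 := by
  classical
  simp only [Set.mem_range, not_exists] at hj
  simp [matchingExp, Finsupp.finsetSum_apply, hj]

theorem matchingExp_le_one {r c : ι → Fin d} (hc : Injective c) (p : Fin d × Fin d) :
    matchingExp r c p ≤ 1 := by
  obtain ⟨i, j⟩ := p
  by_cases hj : j ∈ Set.range c
  · obtain ⟨m, rfl⟩ := hj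
    rw [matchingExp_apply_mk hc]
    split_ifs <;> omega
  · rw [matchingExp_apply_of_notMem_range hj]
    omega

theorem single_le_matchingExp_perm_iff {σ : Perm (Fin d)} {i j : Fin d} :
    Finsupp.single (i, j) 1 ≤ matchingExp σ id ↔ σ j = i := by
  rw [Finsupp.single_le_iff, show (i, j) = (i, id j) from rfl,
    matchingExp_apply_mk injective_id]
  split_ifs <;> simp_all

theorem matchingExp_perm_injective : Injective fun σ : Perm (Fin d) => matchingExp σ id := by
  intro σ τ h
  ext j : 1
  have : Finsupp.single (σ j, j) 1 ≤ matchingExp τ id := by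
    simp only at h
    exact h ▸ single_le_matchingExp_perm_iff.mpr rfl
  exact (single_le_matchingExp_perm_iff.mp this).symm

theorem matchingExp_eq_add_add [DecidableEq ι] (r c : ι → Fin d) {x y : ι} (hxy : x ≠ y) :
    matchingExp r c = Finsupp.single (r x, c x) 1 + Finsupp.single (r y, c y) 1 +
      ∑ m ∈ {x, y}ᶜ, Finsupp.single (r m, c m) 1 := by
  rw [matchingExp, ← Finset.sum_add_sum_compl {x, y}, Finset.sum_pair hxy]

theorem matchingExp_comp_swap [DecidableEq ι] (r c : ι → Fin d) {x y : ι} (hxy : x ≠ y) :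
    matchingExp (r ∘ swap x y) c = Finsupp.single (r y, c x) 1 + Finsupp.single (r x, c y) 1 +
      ∑ m ∈ {x, y}ᶜ, Finsupp.single (r m, c m) 1 := by
  rw [matchingExp_eq_add_add _ _ hxy]
  simp only [comp_apply, swap_apply_left, swap_apply_right]
  congr 1
  refine Finset.sum_congr rfl fun m hm => ?_
  simp only [Finset.mem_compl, Finset.mem_insert, Finset.mem_singleton, not_or] at hm
  rw [swap_apply_of_ne_of_ne hm.1 hm.2]

theorem exists_perm_matchingExp_le {r c : ι → Fin d} (hr : Injective r) (hc : Injective c) :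
    ∃ σ : Perm (Fin d), matchingExp r c ≤ matchingExp σ id := by
  classical
  let σ := ((Equiv.ofInjective c hc).symm.trans (Equiv.ofInjective r hr)).extendSubtype
  have hσ : ∀ m, σ (c m) = r m := fun m => by
    simp [σ, extendSubtype_apply_of_mem _ _ (Set.mem_range_self m)]
  refine ⟨σ, fun ⟨i, j⟩ => ?_⟩
  by_cases hj : j ∈ Set.range c
  · obtain ⟨m, rfl⟩ := hj
    rw [matchingExp_apply_mk hc, show (i, c m) = (i, id (c m)) from rfl,
      matchingExp_apply_mk injective_id, hσ]
  · rw [matchingExp_apply_of_notMem_range hj]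
    exact Nat.zero_le _

theorem eq_matchingExp_support {a : (Fin d × Fin d) →₀ ℕ} (ha : ∀ p, a p ≤ 1) :
    a = matchingExp (fun p : a.support => p.1.1) (fun p => p.1.2) := by
  conv_lhs => rw [← Finsupp.sum_single a]
  rw [matchingExp, Finsupp.sum, ← Finset.sum_coe_sort a.support]
  refine Finset.sum_congr rfl fun p _ => ?_
  have := ha p
  have := Finsupp.mem_support_iff.mp p.2
  rw [show a p = 1 by omega]

theorem mapDomain_fst_matchingExp (r c : ι → Fin d) :
    (matchingExp r c).mapDomain Prod.fst = ∑ m, Finsupp.single (r m) 1 := by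
  simp [matchingExp, Finsupp.mapDomain_finsetSum, Finsupp.mapDomain_single]

theorem mapDomain_snd_matchingExp (r c : ι → Fin d) :
    (matchingExp r c).mapDomain Prod.snd = ∑ m, Finsupp.single (c m) 1 := by
  simp [matchingExp, Finsupp.mapDomain_finsetSum, Finsupp.mapDomain_single]

theorem range_eq_of_add_eq_matchingExp {w : (Fin d × Fin d) →₀ ℕ} {r c : ι → Fin d}
    {r' c' : ι' → Fin d} {σ τ : Perm (Fin d)} (h : w + matchingExp r c = matchingExp σ id)
    (h' : w + matchingExp r' c' = matchingExp τ id) :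
    Set.range r = Set.range r' ∧ Set.range c = Set.range c' := by
  have hrows : ∀ ρ : Perm (Fin d),
      (matchingExp ρ id).mapDomain Prod.fst = ∑ i, Finsupp.single i 1 := fun ρ => by
    rw [mapDomain_fst_matchingExp]
    exact Equiv.sum_comp ρ fun i => Finsupp.single i 1
  constructor
  · refine range_eq_of_sum_single_eq (add_left_cancel (a := w.mapDomain Prod.fst) ?_)
    rw [← mapDomain_fst_matchingExp, ← mapDomain_fst_matchingExp, ← Finsupp.mapDomain_add,
      ← Finsupp.mapDomain_add, h, h', hrows, hrows]
  · refine range_eq_of_sum_single_eq (add_left_cancel (a := w.mapDomain Prod.snd) ?_)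
    rw [← mapDomain_snd_matchingExp, ← mapDomain_snd_matchingExp, ← Finsupp.mapDomain_add,
      ← Finsupp.mapDomain_add, h, h', mapDomain_snd_matchingExp, mapDomain_snd_matchingExp]

theorem matchingExp_eq_of_range_eq {e e' : ℕ} {r c : Fin e → Fin d} {r' c' : Fin e' → Fin d}
    (hr : StrictMono r) (hc : StrictMono c) (hr' : StrictMono r') (hc' : StrictMono c')
    (hR : Set.range r = Set.range r') (hC : Set.range c = Set.range c') :
    matchingExp r c = matchingExp r' c' := by
  obtain rfl : e = e' := by
    have := congrArg (fun s : Set (Fin d) => Nat.card s) hR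
    rwa [Nat.card_range_of_injective hr.injective, Nat.card_range_of_injective hr'.injective,
      Nat.card_fin, Nat.card_fin] at this
  rw [(hr.range_inj hr').mp hR, (hc.range_inj hc').mp hC]

end Matching

section Determinant

variable {k : Type*} [CommRing k] {d : ℕ}

theorem detd_eq_sum :
    detd k d = ∑ σ : Perm (Fin d), monomial (matchingExp σ id) ((sign σ : ℤ) : k) := by
  rw [detd, Matrix.det_apply]
  refine Finset.sum_congr rfl fun σ _ => ?_
  simp only [Matrix.of_apply, X, ← monomial_sum_one, matchingExp, id]
  rw [Units.smul_def, smul_monomial, zsmul_eq_mul, mul_one]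

theorem coeff_detd (b : (Fin d × Fin d) →₀ ℕ) :
    coeff b (detd k d) =
      ∑ σ : Perm (Fin d), if matchingExp σ id = b then ((sign σ : ℤ) : k) else 0 := by
  classical
  simp only [detd_eq_sum, coeff_sum, coeff_monomial]

theorem coeff_detd_matchingExp (σ : Perm (Fin d)) :
    coeff (matchingExp σ id) (detd k d) = ((sign σ : ℤ) : k) := by
  simp [coeff_detd, matchingExp_perm_injective.eq_iff]

theorem coeff_detd_eq_zero {b : (Fin d × Fin d) →₀ ℕ}
    (h : ∀ σ : Perm (Fin d), matchingExp σ id ≠ b) : coeff b (detd k d) = 0 := by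
  simp [coeff_detd, h]

theorem exists_matchingExp_eq_of_coeff_detd_ne_zero {b : (Fin d × Fin d) →₀ ℕ}
    (h : coeff b (detd k d) ≠ 0) : ∃ σ : Perm (Fin d), matchingExp σ id = b := by
  by_contra! h'
  exact h (coeff_detd_eq_zero h')

theorem detd_squarefree : ∀ b ∈ (detd k d).support, ∀ p, b p ≤ 1 := by
  intro b hb p
  obtain ⟨σ, rfl⟩ := exists_matchingExp_eq_of_coeff_detd_ne_zero (mem_support_iff.mp hb)
  exact matchingExp_le_one injective_id p

theorem diffAction_monomial_detd_eq_zero {a : (Fin d × Fin d) →₀ ℕ}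
    (h : ∀ σ : Perm (Fin d), ¬ a ≤ matchingExp σ id) (c : k) :
    diffAction (monomial a c) (detd k d) = 0 := by
  ext w
  rw [coeff_diffAction_monomial_of_squarefree detd_squarefree, coeff_zero]
  by_contra hne
  obtain ⟨σ, hσ⟩ := exists_matchingExp_eq_of_coeff_detd_ne_zero (right_ne_zero_of_mul hne)
  exact h σ (hσ ▸ le_add_self)

theorem diffAction_X_sq_detd (p : Fin d × Fin d) : diffAction (X p ^ 2) (detd k d) = 0 := by
  rw [X_pow_eq_monomial]
  refine diffAction_monomial_detd_eq_zero (fun σ h => ?_) 1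
  have := (Finsupp.single_le_iff.mp h).trans (matchingExp_le_one injective_id p)
  omega

theorem diffAction_X_mul_X_row_detd {i j₁ j₂ : Fin d} (hj : j₁ ≠ j₂) :
    diffAction (X (i, j₁) * X (i, j₂)) (detd k d) = 0 := by
  rw [X_mul_X_eq_monomial]
  refine diffAction_monomial_detd_eq_zero (fun σ h => hj (σ.injective ?_)) 1
  rw [single_le_matchingExp_perm_iff.mp (le_self_add.trans h),
    single_le_matchingExp_perm_iff.mp (le_add_self.trans h)]

theorem diffAction_X_mul_X_col_detd {i₁ i₂ j : Fin d} (hi : i₁ ≠ i₂) :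
    diffAction (X (i₁, j) * X (i₂, j)) (detd k d) = 0 := by
  rw [X_mul_X_eq_monomial]
  refine diffAction_monomial_detd_eq_zero (fun σ h => hi ?_) 1
  rw [← single_le_matchingExp_perm_iff.mp (le_self_add.trans h),
    single_le_matchingExp_perm_iff.mp (le_add_self.trans h)]

theorem add_single_single_eq_matchingExp_mul_swap {w : (Fin d × Fin d) →₀ ℕ} {σ : Perm (Fin d)}
    {i i' j j' : Fin d} (hj : j ≠ j')
    (h : w + (Finsupp.single (i, j) 1 + Finsupp.single (i', j') 1) = matchingExp σ id) :
    w + (Finsupp.single (i, j') 1 + Finsupp.single (i', j) 1) = matchingExp (σ * swap j j') id := by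
  have hσj : σ j = i := single_le_matchingExp_perm_iff.mp (h ▸ le_self_add.trans le_add_self)
  have hσj' : σ j' = i' := single_le_matchingExp_perm_iff.mp (h ▸ le_add_self.trans le_add_self)
  rw [matchingExp_eq_add_add σ id hj] at h
  rw [Perm.coe_mul, matchingExp_comp_swap σ id hj]
  simp only [id, hσj, hσj'] at h ⊢
  rw [add_comm _ (∑ _ ∈ _, _)] at h
  rw [add_right_cancel h, add_comm (Finsupp.single (i', j) 1), add_comm]

theorem coeff_detd_add_single_single_swap {i i' j j' : Fin d} (hj : j ≠ j')
    (w : (Fin d × Fin d) →₀ ℕ) :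
    coeff (w + (Finsupp.single (i, j') 1 + Finsupp.single (i', j) 1)) (detd k d) =
      -coeff (w + (Finsupp.single (i, j) 1 + Finsupp.single (i', j') 1)) (detd k d) := by
  by_cases h : ∃ σ : Perm (Fin d),
      w + (Finsupp.single (i, j) 1 + Finsupp.single (i', j') 1) = matchingExp σ id
  · obtain ⟨σ, hσ⟩ := h
    rw [hσ, add_single_single_eq_matchingExp_mul_swap hj hσ, coeff_detd_matchingExp,
      coeff_detd_matchingExp, Perm.sign_mul, sign_swap hj]
    push_cast
    ring
  · simp only [not_exists] at h
    have h' : ∀ τ : Perm (Fin d),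
        matchingExp τ id ≠ w + (Finsupp.single (i, j') 1 + Finsupp.single (i', j) 1) :=
      fun τ hτ => h _ (add_single_single_eq_matchingExp_mul_swap hj.symm hτ.symm)
    rw [coeff_detd_eq_zero (fun σ hσ => h σ hσ.symm), coeff_detd_eq_zero h', neg_zero]

theorem diffAction_permanent_detd {i i' j j' : Fin d} (hj : j ≠ j') :
    diffAction (X (i, j) * X (i', j') + X (i, j') * X (i', j)) (detd k d) = 0 := by
  ext w
  rw [diffAction_add_left, coeff_add, X_mul_X_eq_monomial, X_mul_X_eq_monomial,
    coeff_diffAction_monomial_of_squarefree detd_squarefree,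
    coeff_diffAction_monomial_of_squarefree detd_squarefree,
    coeff_detd_add_single_single_swap hj, coeff_zero]
  ring

variable (k d) in
def detApolarGens : Set (MvPolynomial (Fin d × Fin d) k) :=
  {p | ∃ i j : Fin d, p = X (i, j) ^ 2} ∪
  {p | ∃ (i j₁ j₂ : Fin d), j₁ ≠ j₂ ∧ p = X (i, j₁) * X (i, j₂)} ∪
  {p | ∃ (i₁ i₂ j : Fin d), i₁ ≠ i₂ ∧ p = X (i₁, j) * X (i₂, j)} ∪
  {p | ∃ (i k' j l : Fin d), i ≠ k' ∧ j ≠ l ∧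
     p = X (i, j) * X (k', l) + X (i, l) * X (k', j)}

theorem span_detApolarGens_le : Ideal.span (detApolarGens k d) ≤ apolarIdeal (detd k d) := by
  refine Ideal.span_le.mpr ?_
  rintro g (((⟨i, j, rfl⟩ | ⟨i, j₁, j₂, hj, rfl⟩) | ⟨i₁, i₂, j, hi, rfl⟩) |
    ⟨i, i', j, j', -, hj, rfl⟩)
  · exact diffAction_X_sq_detd (i, j)
  · exact diffAction_X_mul_X_row_detd hj
  · exact diffAction_X_mul_X_col_detd hi
  · exact diffAction_permanent_detd hj

end Determinant

section NormalForms

variable {k : Type*} [CommRing k] {d : ℕ} {ι : Type*} [Fintype ι]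

theorem monomial_matchingExp_add_comp_swap_mem [DecidableEq ι] {r c : ι → Fin d}
    (hr : Injective r) (hc : Injective c) {x y : ι} (hxy : x ≠ y) :
    monomial (matchingExp r c) (1 : k) + monomial (matchingExp (r ∘ swap x y) c) 1 ∈
      Ideal.span (detApolarGens k d) := by
  have hfac : monomial (matchingExp r c) (1 : k) + monomial (matchingExp (r ∘ swap x y) c) 1 =
      (X (r x, c x) * X (r y, c y) + X (r x, c y) * X (r y, c x)) *
        monomial (∑ m ∈ {x, y}ᶜ, Finsupp.single (r m, c m) 1) 1 := by
    rw [matchingExp_eq_add_add r c hxy, matchingExp_comp_swap r c hxy, X_mul_X_eq_monomial,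
      X_mul_X_eq_monomial, add_mul, monomial_mul, monomial_mul, one_mul,
      add_comm (Finsupp.single (r y, c x) 1)]
  rw [hfac]
  exact Ideal.mul_mem_right _ _
    (Ideal.subset_span (Or.inr ⟨r x, r y, c x, c y, hr.ne hxy, hc.ne hxy, rfl⟩))

theorem monomial_matchingExp_comp_perm_sub_mem [DecidableEq ι] {r c : ι → Fin d}
    (hr : Injective r) (hc : Injective c) (π : Perm ι) :
    monomial (matchingExp (r ∘ π) c) (1 : k) - (sign π : ℤ) • monomial (matchingExp r c) 1 ∈
      Ideal.span (detApolarGens k d) := by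
  induction π using swap_induction_on generalizing r with
  | one => simp
  | swap_mul π x y hxy ih =>
    have hswap := monomial_matchingExp_add_comp_swap_mem (k := k) hr hc hxy
    have key := Ideal.add_mem _ (ih (hr.comp (swap x y).injective))
      (zsmul_mem hswap (sign π : ℤ))
    rw [Perm.sign_mul, sign_swap hxy]
    convert key using 1
    simp only [Perm.coe_mul, comp_assoc, Units.val_mul, Units.val_neg, Units.val_one, smul_add]
    rw [neg_one_mul, neg_smul]
    abel

variable (d) in
/-- Normal forms modulo `detApolarGens`: one partial permutation matrix for each pair of row and
column sets of equal size. -/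
def sortedMatchingExps : Set ((Fin d × Fin d) →₀ ℕ) :=
  {a | ∃ (e : ℕ) (r c : Fin e → Fin d), StrictMono r ∧ StrictMono c ∧ a = matchingExp r c}

theorem monomial_matchingExp_mem_sup {r c : ι → Fin d} (hr : Injective r) (hc : Injective c) :
    monomial (matchingExp r c) (1 : k) ∈
      (Ideal.span (detApolarGens k d)).restrictScalars k ⊔
        restrictSupport k (sortedMatchingExps d) := by
  classical
  -- reindex so that the columns increase, then sort the rows at the cost of a sign
  obtain ⟨τ, hτ⟩ := exists_perm_strictMono_comp (hc.comp (Fintype.equivFin ι).symm.injective)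
  set β := τ.trans (Fintype.equivFin ι).symm
  obtain ⟨π, hπ⟩ := exists_perm_strictMono_comp (hr.comp β.injective)
  have hβ : matchingExp r c = matchingExp (((r ∘ β) ∘ π) ∘ ⇑π⁻¹) (c ∘ β) := by
    rw [comp_assoc, ← Perm.coe_mul, mul_inv_cancel, Perm.coe_one, comp_id,
      matchingExp_comp_equiv]
  rw [hβ, ← sub_add_cancel (monomial _ (1 : k))
    ((sign π⁻¹ : ℤ) • monomial (matchingExp ((r ∘ β) ∘ π) (c ∘ β)) (1 : k))]
  refine Submodule.add_mem _ (Submodule.mem_sup_left ?_) (Submodule.mem_sup_right ?_)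
  · exact monomial_matchingExp_comp_perm_sub_mem ((hr.comp β.injective).comp π.injective)
      (hc.comp β.injective) π⁻¹
  · exact zsmul_mem ((monomial_mem_restrictSupport k (s := sortedMatchingExps d)).mpr
      (Or.inl ⟨_, _, _, hπ, hτ, rfl⟩)) _

theorem monomial_mem_sup_of_partialPerm {a : (Fin d × Fin d) →₀ ℕ} (ha : ∀ p, a p ≤ 1)
    (hrow : ∀ i j₁ j₂, j₁ ≠ j₂ → a (i, j₁) ≠ 0 → a (i, j₂) = 0)
    (hcol : ∀ i₁ i₂ j, i₁ ≠ i₂ → a (i₁, j) ≠ 0 → a (i₂, j) = 0) :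
    monomial a (1 : k) ∈
      (Ideal.span (detApolarGens k d)).restrictScalars k ⊔
        restrictSupport k (sortedMatchingExps d) := by
  rw [eq_matchingExp_support ha]
  refine monomial_matchingExp_mem_sup (fun p q h => ?_) (fun p q h => ?_)
  · obtain ⟨⟨i, j⟩, hp⟩ := p
    obtain ⟨⟨i', j'⟩, hq⟩ := q
    obtain rfl : i = i' := h
    obtain rfl : j = j' := by
      by_contra hj
      exact Finsupp.mem_support_iff.mp hq (hrow i j j' hj (Finsupp.mem_support_iff.mp hp))
    rfl
  · obtain ⟨⟨i, j⟩, hp⟩ := p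
    obtain ⟨⟨i', j'⟩, hq⟩ := q
    obtain rfl : j = j' := h
    obtain rfl : i = i' := by
      by_contra hi
      exact Finsupp.mem_support_iff.mp hq (hcol i i' j hi (Finsupp.mem_support_iff.mp hp))
    rfl

theorem monomial_mem_sup (a : (Fin d × Fin d) →₀ ℕ) :
    monomial a (1 : k) ∈
      (Ideal.span (detApolarGens k d)).restrictScalars k ⊔
        restrictSupport k (sortedMatchingExps d) := by
  by_cases hsq : ∃ p, 2 ≤ a p
  · obtain ⟨p, hp⟩ := hsq
    refine Submodule.mem_sup_left (monomial_mem_of_le ?_ (Finsupp.single_le_iff.mpr hp))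
    rw [← X_pow_eq_monomial]
    exact Ideal.subset_span (Or.inl (Or.inl (Or.inl ⟨p.1, p.2, rfl⟩)))
  by_cases hrow : ∃ i j₁ j₂, j₁ ≠ j₂ ∧ a (i, j₁) ≠ 0 ∧ a (i, j₂) ≠ 0
  · obtain ⟨i, j₁, j₂, hj, h₁, h₂⟩ := hrow
    refine Submodule.mem_sup_left (monomial_mem_of_le ?_ (single_add_single_le
      (fun h => hj (congrArg Prod.snd h)) h₁ h₂))
    rw [← X_mul_X_eq_monomial]
    exact Ideal.subset_span (Or.inl (Or.inl (Or.inr ⟨i, j₁, j₂, hj, rfl⟩)))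
  by_cases hcol : ∃ i₁ i₂ j, i₁ ≠ i₂ ∧ a (i₁, j) ≠ 0 ∧ a (i₂, j) ≠ 0
  · obtain ⟨i₁, i₂, j, hi, h₁, h₂⟩ := hcol
    refine Submodule.mem_sup_left (monomial_mem_of_le ?_ (single_add_single_le
      (fun h => hi (congrArg Prod.fst h)) h₁ h₂))
    rw [← X_mul_X_eq_monomial]
    exact Ideal.subset_span (Or.inl (Or.inr ⟨i₁, i₂, j, hi, rfl⟩))
  simp only [not_exists, not_and, not_not, not_le] at hsq hrow hcol
  exact monomial_mem_sup_of_partialPerm (fun p => Nat.le_of_lt_succ (hsq p)) hrow hcol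

theorem mem_span_detApolarGens_sup_restrictSupport (θ : MvPolynomial (Fin d × Fin d) k) :
    θ ∈ (Ideal.span (detApolarGens k d)).restrictScalars k ⊔
      restrictSupport k (sortedMatchingExps d) := by
  induction θ using MvPolynomial.induction_on' with
  | monomial a c =>
    rw [← mul_one c, ← smul_eq_mul, ← smul_monomial]
    exact Submodule.smul_mem _ c (monomial_mem_sup a)
  | add p q hp hq => exact Submodule.add_mem _ hp hq

theorem eq_zero_of_mem_restrictSupport_of_mem_apolarIdeal {v : MvPolynomial (Fin d × Fin d) k}
    (hv : v ∈ restrictSupport k (sortedMatchingExps d)) (hdet : v ∈ apolarIdeal (detd k d)) :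
    v = 0 := by
  ext a
  rw [coeff_zero]
  by_contra hva
  obtain ⟨e, r, c, hr, hc, rfl⟩ := hv (mem_support_iff.mpr hva)
  obtain ⟨σ, hσ⟩ := exists_perm_matchingExp_le hr.injective hc.injective
  have hw : matchingExp σ id - matchingExp r c + matchingExp r c = matchingExp σ id :=
    tsub_add_cancel_of_le hσ
  have hcoeff : coeff (matchingExp σ id - matchingExp r c) (diffAction v (detd k d)) =
      coeff (matchingExp r c) v * ((sign σ : ℤ) : k) := by
    rw [coeff_diffAction_of_squarefree detd_squarefree,
      Finset.sum_eq_single (matchingExp r c), hw, coeff_detd_matchingExp]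
    · -- a normal form `b` reaching `x^(m_σ - a)` has the row and column sets of `a`
      intro b hb hne
      rw [coeff_detd_eq_zero, mul_zero]
      intro τ hτ
      obtain ⟨e', r', c', hr', hc', rfl⟩ := hv hb
      obtain ⟨hR, hC⟩ := range_eq_of_add_eq_matchingExp hw hτ.symm
      exact hne (matchingExp_eq_of_range_eq hr' hc' hr hc hR.symm hC.symm)
    · exact fun h => absurd (mem_support_iff.mpr hva) h
  rw [mem_apolarIdeal.mp hdet, coeff_zero] at hcoeff
  have hunit : IsUnit ((sign σ : ℤ) : k) := (sign σ).isUnit.map (Int.castRingHom k)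
  exact hva (hunit.mul_left_eq_zero.mp hcoeff.symm)

end NormalForms

theorem apolarIdeal_detd (k : Type*) [CommRing k] (d : ℕ) :
    apolarIdeal (detd k d) = Ideal.span (detApolarGens k d) := by
  refine le_antisymm (fun θ hθ => ?_) span_detApolarGens_le
  obtain ⟨y, hy, v, hv, rfl⟩ := Submodule.mem_sup.mp (mem_span_detApolarGens_sup_restrictSupport θ)
  have hv0 : v = 0 := eq_zero_of_mem_restrictSupport_of_mem_apolarIdeal hv
    (by simpa using sub_mem hθ (span_detApolarGens_le hy))
  rwa [hv0, add_zero]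

theorem det_apolar_ideal_gens_general (k : Type*) [Field k] (d : ℕ) :
    ∀ θ : MvPolynomial (Fin d × Fin d) k,
      diffAction θ (detd k d) = 0 ↔
        θ ∈ Ideal.span
          ({p | ∃ i j : Fin d, p = X (i, j) ^ 2} ∪
           {p | ∃ (i j₁ j₂ : Fin d), j₁ ≠ j₂ ∧ p = X (i, j₁) * X (i, j₂)} ∪
           {p | ∃ (i₁ i₂ j : Fin d), i₁ ≠ i₂ ∧ p = X (i₁, j) * X (i₂, j)} ∪
           {p | ∃ (i k' j l : Fin d), i ≠ k' ∧ j ≠ l ∧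
              p = X (i, j) * X (k', l) + X (i, l) * X (k', j)}) :=
  SetLike.ext_iff.mp (apolarIdeal_detd k d)

/-- Shafiei's theorem: for `d ≥ 2`, over a field of characteristic 0, the apolar ideal of the
generic `d × d` determinant is generated by the quadrics: squares of variables, products of two
variables from the same row, products of two variables from the same column, and `2 × 2`
permanents of the matrix of dual variables. -/
theorem det_apolar_ideal_gens (k : Type*) [Field k] [CharZero k] (d : ℕ) (hd : 2 ≤ d) :
    ∀ θ : MvPolynomial (Fin d × Fin d) k,
      diffAction θ (detd k d) = 0 ↔
        θ ∈ Ideal.span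
          ({p | ∃ i j : Fin d, p = X (i, j) ^ 2} ∪
           {p | ∃ (i j₁ j₂ : Fin d), j₁ ≠ j₂ ∧ p = X (i, j₁) * X (i, j₂)} ∪
           {p | ∃ (i₁ i₂ j : Fin d), i₁ ≠ i₂ ∧ p = X (i₁, j) * X (i₂, j)} ∪
           {p | ∃ (i k' j l : Fin d), i ≠ k' ∧ j ≠ l ∧
              p = X (i, j) * X (k', l) + X (i, l) * X (k', j)}) :=
  det_apolar_ideal_gens_general k d
end

section
/- Let k be a field of characteristic 0 and d ≥ 3. For every linear form ℓ ∈ k[x_{1,1},…,x_{d,d}], the form per_d − ℓ^d is concise in the d² variables x_{1,1},…,x_{d,d}; equivalently, its d² first partial derivatives are linearly independent over k, i.e. no nonzero constant-coefficient first-order differential operator annihilates per_d − ℓ^d. -/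
open MvPolynomial

/-- The generic d×d permanent, a form of degree `d` in the `d²` variables `x_{i,j}`. -/
noncomputable def perd (k : Type*) [CommRing k] (d : ℕ) : MvPolynomial (Fin d × Fin d) k :=
  ∑ σ : Equiv.Perm (Fin d), ∏ i : Fin d, X (i, σ i)

section Aux

variable {k : Type*} [CommRing k] {d : ℕ}

open Finset

lemma aux_prod_X_eq_monomial {ι σ : Type*} (s : Finset ι) (f : ι → σ) :
    (∏ l ∈ s, (X (f l) : MvPolynomial σ k)) =
      monomial (∑ l ∈ s, Finsupp.single (f l) 1) 1 := by
  classical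
  induction s using Finset.cons_induction with
  | empty => simp
  | cons a s ha ih =>
      rw [Finset.prod_cons, Finset.sum_cons, ih, X, monomial_mul, one_mul]

lemma aux_M_apply (σ : Equiv.Perm (Fin d)) (i j : Fin d) :
    (∑ l : Fin d, Finsupp.single (l, σ l) (1 : ℕ)) (i, j) = if σ i = j then 1 else 0 := by
  classical
  rw [Finsupp.finset_sum_apply, Finset.sum_eq_single i]
  · simp [Finsupp.single_apply, Prod.ext_iff]
  · intro l _ hne
    simp [Finsupp.single_apply, Prod.ext_iff, hne]
  · simp

lemma aux_pderiv_perd (i j : Fin d) :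
    pderiv (i, j) (perd k d) =
      ∑ σ : Equiv.Perm (Fin d),
        if σ i = j then ∏ l ∈ Finset.univ.erase i, (X (l, σ l) : MvPolynomial (Fin d × Fin d) k)
        else 0 := by
  classical
  rw [perd, map_sum]
  refine Finset.sum_congr rfl fun σ _ => ?_
  rw [aux_prod_X_eq_monomial, pderiv_monomial, aux_M_apply]
  by_cases h : σ i = j
  · have hM : (∑ l : Fin d, Finsupp.single (l, σ l) (1 : ℕ))
        = Finsupp.single ((i : Fin d), j) 1 + ∑ l ∈ Finset.univ.erase i, Finsupp.single (l, σ l) 1 := by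
      rw [← h]
      exact (Finset.add_sum_erase Finset.univ (fun l => Finsupp.single (l, σ l) 1)
        (Finset.mem_univ i)).symm
    rw [hM, add_tsub_cancel_left, if_pos h, aux_prod_X_eq_monomial]
    simp [h]
  · simp [h]

lemma aux_eval_pderiv_perd (p : Fin d × Fin d → k) (i j : Fin d) :
    eval p (pderiv (i, j) (perd k d)) =
      ∑ σ : Equiv.Perm (Fin d),
        if σ i = j then ∏ l ∈ Finset.univ.erase i, p (l, σ l) else 0 := by
  classical
  rw [aux_pderiv_perd, map_sum]
  refine Finset.sum_congr rfl fun σ _ => ?_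
  rw [apply_ite (eval p), map_zero, map_prod]
  simp

lemma aux_pderiv_linForm (b : Fin d × Fin d → k) (x : Fin d × Fin d) :
    pderiv x (linForm b) = C (b x) := by
  classical
  rw [linForm, map_sum]
  rw [Finset.sum_eq_single x]
  · rw [pderiv_C_mul, pderiv_X_self, mul_one]
  · intro y _ hne
    rw [pderiv_C_mul, pderiv_X_of_ne hne, mul_zero]
  · simp

lemma aux_perm_ext (σ τ : Equiv.Perm (Fin d)) (i : Fin d)
    (h : ∀ l, l ≠ i → σ l = τ l) : σ = τ := by
  have hi : σ i = τ i := by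
    by_contra hne
    have hm : τ.symm (σ i) ≠ i := fun hm => hne (by
      have := congrArg τ hm
      rwa [Equiv.apply_symm_apply] at this)
    have : σ (τ.symm (σ i)) = σ i := by
      rw [h _ hm, Equiv.apply_symm_apply]
    exact hm (σ.injective this)
  refine Equiv.ext fun l => ?_
  by_cases hl : l = i
  · rw [hl]; exact hi
  · exact h l hl

end Aux

/-- For `d ≥ 3` and any linear form `ℓ` over a field of characteristic 0, the form
`per_d - ℓ^d` is concise: its `d²` first partial derivatives are linearly independent,
i.e. no nonzero constant-coefficient first-order differential operator annihilates it. -/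
theorem per_sub_power_concise (k : Type*) [Field k] [CharZero k] (d : ℕ) (hd : 3 ≤ d)
    (b : Fin d × Fin d → k) :
    LinearIndependent k fun ij : Fin d × Fin d => pderiv ij (perd k d - linForm b ^ d) := by
  classical
  rw [Fintype.linearIndependent_iff]
  intro c hc
  set L := linForm b with hL
  -- rewrite the hypothesis
  have hder : ∀ ij : Fin d × Fin d,
      pderiv ij (perd k d - L ^ d) =
        pderiv ij (perd k d) - C ((d : k) * b ij) * L ^ (d - 1) := by
    intro ij
    rw [map_sub, pderiv_pow, aux_pderiv_linForm]
    congr 1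
    rw [show ((d : MvPolynomial (Fin d × Fin d) k)) = C ((d : k)) by
        simp, C_mul]
    ring
  set lam : k := ∑ ij : Fin d × Fin d, c ij * ((d : k) * b ij) with hlamdef
  have hEq : ∑ ij : Fin d × Fin d, c ij • pderiv ij (perd k d) = C lam * L ^ (d - 1) := by
    have h1 : ∑ ij : Fin d × Fin d, c ij • pderiv ij (perd k d)
        - ∑ ij : Fin d × Fin d, c ij • (C ((d : k) * b ij) * L ^ (d - 1)) = 0 := by
      rw [← Finset.sum_sub_distrib]
      calc ∑ ij : Fin d × Fin d,
            (c ij • pderiv ij (perd k d) - c ij • (C ((d : k) * b ij) * L ^ (d - 1)))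
          = ∑ ij : Fin d × Fin d, c ij • pderiv ij (perd k d - L ^ d) := by
            refine Finset.sum_congr rfl fun ij _ => ?_
            rw [hder, smul_sub]
        _ = 0 := hc
    have h2 : ∑ ij : Fin d × Fin d, c ij • (C ((d : k) * b ij) * L ^ (d - 1))
        = C lam * L ^ (d - 1) := by
      rw [hlamdef, map_sum, Finset.sum_mul]
      refine Finset.sum_congr rfl fun ij _ => ?_
      simp only [smul_eq_C_mul, C_mul]
      ring
    rw [h2] at h1
    exact sub_eq_zero.mp h1
  -- Step 2: the right-hand side vanishes
  have hlamb : ∀ ij : Fin d × Fin d, lam * b ij ^ (d - 1) = 0 := by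
    intro ij
    set p : Fin d × Fin d → k := fun x => if x = ij then 1 else 0 with hp
    have h := congrArg (eval p) hEq
    rw [map_sum, map_mul, map_pow, eval_C] at h
    have hL0 : eval p L = b ij := by
      rw [hL, linForm, map_sum]
      simp only [map_mul, eval_C, eval_X, hp]
      rw [Finset.sum_eq_single ij]
      · simp
      · intro y _ hne; simp [hne]
      · simp
    have hP0 : ∀ x : Fin d × Fin d, eval p (pderiv x (perd k d)) = 0 := by
      rintro ⟨i', j'⟩
      rw [aux_eval_pderiv_perd]
      refine Finset.sum_eq_zero fun σ _ => ?_
      by_cases hσ : σ i' = j'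
      · rw [if_pos hσ]
        have hcard : 1 < (Finset.univ.erase i' : Finset (Fin d)).card := by
          rw [Finset.card_erase_of_mem (Finset.mem_univ i'), Finset.card_univ,
            Fintype.card_fin]
          omega
        obtain ⟨l, hl, hlne⟩ := Finset.exists_mem_ne hcard ij.1
        refine Finset.prod_eq_zero hl ?_
        rw [hp]
        have : (l, σ l) ≠ ij := fun hh => hlne (by rw [← hh])
        simp [this]
      · rw [if_neg hσ]
    have hLHS : ∑ x : Fin d × Fin d, eval p (c x • pderiv x (perd k d)) = 0 := by
      refine Finset.sum_eq_zero fun x _ => ?_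
      rw [smul_eq_C_mul, map_mul, eval_C, hP0, mul_zero]
    rw [hLHS, hL0] at h
    exact h.symm
  have hrhs : C lam * L ^ (d - 1) = 0 := by
    by_cases hl : lam = 0
    · rw [hl]; simp
    · have hb : ∀ ij : Fin d × Fin d, b ij = 0 := by
        intro ij
        by_contra hbij
        exact hl ((mul_eq_zero.mp (hlamb ij)).resolve_right (pow_ne_zero _ hbij))
      have hL0 : L = 0 := by
        rw [hL, linForm]
        refine Finset.sum_eq_zero fun x _ => ?_
        rw [hb x]; simp
      rw [hL0, zero_pow (by omega), mul_zero]
  rw [hrhs] at hEq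
  -- Step 3: recover the coefficients
  rintro ⟨i, j⟩
  set σ0 : Equiv.Perm (Fin d) := Equiv.swap i j with hσ0
  have hσ0i : σ0 i = j := Equiv.swap_apply_left i j
  set p : Fin d × Fin d → k := fun x => if x.2 = σ0 x.1 ∧ x.1 ≠ i then 1 else 0 with hp
  have h := congrArg (eval p) hEq
  rw [map_sum, map_zero] at h
  have hterm : ∀ x : Fin d × Fin d,
      eval p (c x • pderiv x (perd k d)) = if x = (i, j) then c x else 0 := by
    rintro ⟨i', j'⟩
    rw [smul_eq_C_mul, map_mul, eval_C, aux_eval_pderiv_perd]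
    have hinner : (∑ σ : Equiv.Perm (Fin d),
        if σ i' = j' then ∏ l ∈ Finset.univ.erase i', p (l, σ l) else 0) =
          if (i', j') = ((i : Fin d), j) then 1 else 0 := by
      by_cases hii : i' = i
      · subst hii
        have hprod : ∀ σ : Equiv.Perm (Fin d),
            (∏ l ∈ Finset.univ.erase i', p (l, σ l)) = if σ = σ0 then 1 else 0 := by
          intro σ
          by_cases hσ : σ = σ0
          · subst hσ
            rw [if_pos rfl]
            refine Finset.prod_eq_one fun l hl => ?_
            have hlne : l ≠ i' := (Finset.mem_erase.mp hl).1
            rw [hp]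
            simp [hlne]
          · rw [if_neg hσ]
            have : ∃ l, l ≠ i' ∧ σ l ≠ σ0 l := by
              by_contra hh
              push_neg at hh
              exact hσ (aux_perm_ext σ σ0 i' fun l hl => hh l hl)
            obtain ⟨l, hlne, hlval⟩ := this
            refine Finset.prod_eq_zero (Finset.mem_erase.mpr ⟨hlne, Finset.mem_univ l⟩) ?_
            rw [hp]
            simp [hlval]
        rw [Finset.sum_congr rfl fun σ _ => by rw [hprod σ]]
        rw [Finset.sum_eq_single σ0]
        · rw [if_pos rfl, hσ0i]
          by_cases hj : j' = j
          · subst hj; simp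
          · rw [if_neg (fun hh => hj hh.symm), if_neg (by simp [hj])]
        · intro σ _ hne
          rw [if_neg hne, ite_self]
        · simp
      · have hzero : ∀ σ : Equiv.Perm (Fin d),
            (if σ i' = j' then ∏ l ∈ Finset.univ.erase i', p (l, σ l) else 0) = 0 := by
          intro σ
          by_cases hσ : σ i' = j'
          · rw [if_pos hσ]
            refine Finset.prod_eq_zero
              (Finset.mem_erase.mpr ⟨fun hh => hii hh.symm, Finset.mem_univ i⟩) ?_
            rw [hp]
            simp
          · rw [if_neg hσ]
        rw [Finset.sum_eq_zero fun σ _ => hzero σ, if_neg (by simp [hii])]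
    rw [hinner]
    by_cases hx : ((i' : Fin d), j') = (i, j) <;> simp [hx]
  rw [Finset.sum_congr rfl fun x _ => hterm x] at h
  rw [Finset.sum_ite_eq' Finset.univ ((i : Fin d), j) c] at h
  simpa using h
end

section
/- Let k be a field of characteristic 0 (or of characteristic > d). Suppose det_d = c₁ℓ₁^d + ⋯ + c_rℓ_r^d for scalars c_i ∈ k and linear forms ℓ_i ∈ k[x_{1,1},…,x_{d,d}] with coefficient matrices A_i (so ℓ_i = Σ_{j,l} (A_i)_{j,l} x_{j,l}). Then at least one of the matrices A_i is invertible, i.e. det(A_i) ≠ 0 for some i. In other words, no power sum decomposition of det_d consists entirely of linear forms with singular coefficient matrices. -/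
open MvPolynomial

/-- The linear form with coefficient matrix `A`, namely `ℓ = Σ_{j,l} A_{j,l} x_{j,l}`. -/
noncomputable def linFormM {k : Type*} [CommRing k] {d : ℕ}
    (A : Matrix (Fin d) (Fin d) k) : MvPolynomial (Fin d × Fin d) k :=
  ∑ ij : Fin d × Fin d, C (A ij.1 ij.2) * X ij

/-!
Apply to both sides the linear functional `p ↦ (det_d(∂) p)(0)`. Since
`∂_{v_1} ⋯ ∂_{v_d} ℓ_A^d = d! · A_{v_1} ⋯ A_{v_d}`, it sends `ℓ_A^d` to `d! · det A`, while on
`det_d` it picks out the signed coefficients of the monomials `∏ x_{τ i, i}` and gives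
`∑_τ sign(τ)² = d!`. Hence `d! = d! · ∑ c_i det A_i`, and `d! ≠ 0` in the characteristic at hand.
-/

open Finsupp Equiv

namespace MvPolynomial

variable {R σ : Type*} [CommSemiring R]

noncomputable def iteratedPDeriv (l : List σ) : Module.End R (MvPolynomial σ R) :=
  (l.map fun v => (pderiv v).toLinearMap).prod

@[simp] lemma iteratedPDeriv_nil (p : MvPolynomial σ R) : iteratedPDeriv [] p = p := rfl

@[simp] lemma iteratedPDeriv_cons (v : σ) (l : List σ) (p : MvPolynomial σ R) :
    iteratedPDeriv (v :: l) p = pderiv v (iteratedPDeriv l p) := rfl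

lemma coeff_iteratedPDeriv {l : List σ} (hl : l.Nodup) {m : σ →₀ ℕ} (hm : ∀ v ∈ l, m v = 0)
    (p : MvPolynomial σ R) :
    coeff m (iteratedPDeriv l p) = coeff (m + (l.map fun v => single v 1).sum) p := by
  induction l generalizing m with
  | nil => simp
  | cons v l ih =>
    obtain ⟨hvl, hl⟩ := List.nodup_cons.mp hl
    have hm' : ∀ w ∈ l, (m + single v 1 : σ →₀ ℕ) w = 0 := fun w hw => by
      simp [hm w (List.mem_cons_of_mem v hw), single_eq_of_ne (ne_of_mem_of_not_mem hw hvl)]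
    rw [iteratedPDeriv_cons, coeff_pderiv, ih hl hm', hm v List.mem_cons_self, List.map_cons,
      List.sum_cons, add_assoc]
    simp

lemma iteratedPDeriv_pow_of_pderiv_eq_C {p : MvPolynomial σ R} {a : σ → R}
    (hp : ∀ v, pderiv v p = C (a v)) (l : List σ) (n : ℕ) :
    iteratedPDeriv l (p ^ n) =
      C (n.descFactorial l.length * (l.map a).prod) * p ^ (n - l.length) := by
  induction l with
  | nil => simp
  | cons v l ih =>
    rw [iteratedPDeriv_cons, ih, pderiv_C_mul, pderiv_pow, hp, ← map_natCast C,
      List.length_cons, Nat.descFactorial_succ, Nat.sub_sub, List.map_cons, List.prod_cons]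
    simp only [map_mul, Nat.cast_mul]
    ring

lemma pderiv_sum_C_mul_X [Fintype σ] (a : σ → R) (v : σ) :
    pderiv v (∑ i, C (a i) * X i) = C (a v) := by
  classical
  simp [pderiv_X, Pi.single_apply]

end MvPolynomial

lemma Nat.cast_factorial_ne_zero_of_ringChar {k : Type*} [NonAssocSemiring k] [NoZeroDivisors k]
    [Nontrivial k] {d : ℕ} (hchar : ringChar k = 0 ∨ d < ringChar k) : (d.factorial : k) ≠ 0 := by
  rw [Ne, ringChar.spec]
  rcases hchar with h0 | hlt
  · simp [h0, Nat.factorial_ne_zero]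
  · have hp : (ringChar k).Prime :=
      (CharP.char_is_prime_or_zero k (ringChar k)).resolve_right (by omega)
    rw [hp.dvd_factorial]
    omega

section DetPairing

variable (k : Type*) [CommRing k] (d : ℕ)

/-- The apolar pairing with `det_d`: `p ↦ (det_d(∂) p)(0)`, where `det_d(∂)` substitutes
`∂/∂x_{i,j}` for `x_{i,j}` in `det_d`. -/
noncomputable def detPairing : MvPolynomial (Fin d × Fin d) k →ₗ[k] k :=
  ∑ τ : Perm (Fin d), ((Perm.sign τ : ℤ) : k) •
    lcoeff k 0 ∘ₗ iteratedPDeriv (List.ofFn fun i => (τ i, i))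

variable {k d}

lemma detPairing_apply (p : MvPolynomial (Fin d × Fin d) k) :
    detPairing k d p = ∑ τ : Perm (Fin d), ((Perm.sign τ : ℤ) : k) *
      coeff 0 (iteratedPDeriv (List.ofFn fun i => (τ i, i)) p) := by
  simp [detPairing]

lemma detPairing_linFormM_pow (A : Matrix (Fin d) (Fin d) k) :
    detPairing k d (linFormM A ^ d) = d.factorial * A.det := by
  have hA : ∀ v, pderiv v (linFormM A) = C (A v.1 v.2) :=
    pderiv_sum_C_mul_X fun v : Fin d × Fin d => A v.1 v.2
  rw [detPairing_apply, Matrix.det_apply', Finset.mul_sum]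
  refine Finset.sum_congr rfl fun τ _ => ?_
  rw [iteratedPDeriv_pow_of_pderiv_eq_C hA, List.length_ofFn, Nat.sub_self, pow_zero, mul_one,
    coeff_zero_C, Nat.descFactorial_self, List.map_ofFn, List.prod_ofFn]
  exact mul_left_comm _ _ _

lemma sum_single_perm_apply (σ : Perm (Fin d)) (i j : Fin d) :
    (∑ i', single (σ i', i') 1 : Fin d × Fin d →₀ ℕ) (j, i) = if σ i = j then 1 else 0 := by
  simp only [Finsupp.finsetSum_apply, Finsupp.single_apply, Prod.ext_iff]
  rw [Finset.sum_eq_single i] <;> aesop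

lemma sum_single_perm_injective :
    Function.Injective fun σ : Perm (Fin d) => (∑ i, single (σ i, i) 1 : Fin d × Fin d →₀ ℕ) := by
  intro σ τ h
  refine Equiv.ext fun i => ?_
  have := congrArg (fun s : Fin d × Fin d →₀ ℕ => s (σ i, i)) h
  simp only [sum_single_perm_apply] at this
  simpa [eq_comm] using this

lemma detd_eq_sum_monomial :
    detd k d = ∑ σ : Perm (Fin d),
      monomial (∑ i, single (σ i, i) 1) ((Perm.sign σ : ℤ) : k) := by
  simp [detd, Matrix.det_apply', monomial_sum_index, X]

lemma coeff_detd_s13 (τ : Perm (Fin d)) :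
    coeff (∑ i, single (τ i, i) 1) (detd k d) = ((Perm.sign τ : ℤ) : k) := by
  rw [detd_eq_sum_monomial, coeff_sum]
  simp [coeff_monomial, sum_single_perm_injective.eq_iff]

lemma detPairing_detd : detPairing k d (detd k d) = d.factorial := by
  rw [detPairing_apply]
  have hsign : ∀ τ : Perm (Fin d), ((Perm.sign τ : ℤ) : k) * ((Perm.sign τ : ℤ) : k) = 1 := by
    intro τ
    rw [← Int.cast_mul, ← Units.val_mul, Int.units_mul_self, Units.val_one, Int.cast_one]
  have hnodup (τ : Perm (Fin d)) : (List.ofFn fun i => (τ i, i)).Nodup :=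
    List.nodup_ofFn.mpr fun i j h => congrArg Prod.snd h
  simp [coeff_iteratedPDeriv (hnodup _), List.map_ofFn, List.sum_ofFn, coeff_detd_s13, hsign,
    Fintype.card_perm]

end DetPairing

/-- Over a field of characteristic `0` or `> d`, in any power sum decomposition
`det_d = Σ c_i ℓ_i^d` at least one of the coefficient matrices of the linear forms `ℓ_i`
is invertible. -/
theorem det_decomposition_has_invertible_matrix {k : Type*} [Field k] {d : ℕ}
    (hchar : ringChar k = 0 ∨ d < ringChar k) {r : ℕ}
    (c : Fin r → k) (A : Fin r → Matrix (Fin d) (Fin d) k)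
    (h : detd k d = ∑ i, C (c i) * linFormM (A i) ^ d) :
    ∃ i, (A i).det ≠ 0 := by
  by_contra! hsingular
  apply Nat.cast_factorial_ne_zero_of_ringChar hchar
  calc (d.factorial : k) = detPairing k d (detd k d) := detPairing_detd.symm
    _ = ∑ i, c i * (d.factorial * (A i).det) := by
      simp only [h, map_sum, C_mul', map_smul, detPairing_linFormM_pow, smul_eq_mul]
    _ = 0 := by simp [hsingular]
end

section
/- (Krishna–Makam identity.) Over any commutative ring, the generic 3×3 determinant satisfies det₃ = x_{1,1}(x_{2,2}+x_{2,3})(x_{3,1}+x_{3,3}) + (x_{1,2}+x_{1,3})x_{2,1}x_{3,2} − (x_{1,1}+x_{1,3})x_{2,2}x_{3,1} − x_{1,2}(x_{2,1}+x_{2,3})(x_{3,2}+x_{3,3}) + (x_{1,2}−x_{1,1})x_{2,3}(x_{3,1}+x_{3,2}+x_{3,3}). In particular, det₃ is a sum of 5 products of linear forms, so its Waring rank over a field of characteristic 0 is at most 20. -/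
open MvPolynomial

/-- The generic 3×3 determinant, a cubic form in the 9 variables `x_{i,j}`
(indexed here from 0, so `x_{i,j} = X (i-1, j-1)`). -/
noncomputable def det3 (R : Type*) [CommRing R] : MvPolynomial (Fin 3 × Fin 3) R :=
  Matrix.det (Matrix.of fun i j : Fin 3 => X (i, j))

noncomputable def e {k : Type*} [CommRing k] (p : Fin 3 × Fin 3) : (Fin 3 × Fin 3) → k :=
  Pi.single p 1

lemma linForm_add {k : Type*} [CommRing k] (a b : (Fin 3 × Fin 3) → k) :
    linForm (a + b) = linForm a + linForm b := by
  simp [linForm, add_mul, Finset.sum_add_distrib]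

lemma linForm_sub {k : Type*} [CommRing k] (a b : (Fin 3 × Fin 3) → k) :
    linForm (a - b) = linForm a - linForm b := by
  simp [linForm, sub_mul, Finset.sum_sub_distrib]

lemma linForm_e {k : Type*} [CommRing k] (p : Fin 3 × Fin 3) :
    linForm (e (k := k) p) = X p := by
  simp [linForm, e, Pi.single_apply, ite_mul, Finset.sum_ite_eq']

lemma det3_eq (R : Type*) [CommRing R] : det3 R =
        X (0, 0) * (X (1, 1) + X (1, 2)) * (X (2, 0) + X (2, 2))
          + (X (0, 1) + X (0, 2)) * X (1, 0) * X (2, 1)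
          - (X (0, 0) + X (0, 2)) * X (1, 1) * X (2, 0)
          - X (0, 1) * (X (1, 0) + X (1, 2)) * (X (2, 1) + X (2, 2))
          + (X (0, 1) - X (0, 0)) * X (1, 2) * (X (2, 0) + X (2, 1) + X (2, 2)) := by
  rw [det3, Matrix.det_fin_three]
  simp only [Matrix.of_apply]
  ring

/-- The Krishna–Makam identity: over any commutative ring, `det₃` is the displayed sum of 5
products of linear forms; in particular, over a field of characteristic 0 its Waring rank is
at most `20`. -/
theorem krishna_makam (R : Type*) [CommRing R] (k : Type*) [Field k] [CharZero k] :
    (det3 R =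
        X (0, 0) * (X (1, 1) + X (1, 2)) * (X (2, 0) + X (2, 2))
          + (X (0, 1) + X (0, 2)) * X (1, 0) * X (2, 1)
          - (X (0, 0) + X (0, 2)) * X (1, 1) * X (2, 0)
          - X (0, 1) * (X (1, 0) + X (1, 2)) * (X (2, 1) + X (2, 2))
          + (X (0, 1) - X (0, 0)) * X (1, 2) * (X (2, 0) + X (2, 1) + X (2, 2))) ∧
      ∃ (c : Fin 20 → k) (a : Fin 20 → (Fin 3 × Fin 3) → k),
        det3 k = ∑ i, C (c i) * linForm (a i) ^ 3 := by
  refine ⟨det3_eq R, ?_⟩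
  set q : k := (24 : k)⁻¹ with hq
  refine ⟨![q, q, -q, -q, q, q, -q, -q, -q, -q, q, q, -q, -q, q, q, q, q, -q, -q],
    ![e (0,0) + (e (1,1) + e (1,2)) + (e (2,0) + e (2,2)),
      e (0,0) - (e (1,1) + e (1,2)) - (e (2,0) + e (2,2)),
      e (0,0) + (e (1,1) + e (1,2)) - (e (2,0) + e (2,2)),
      e (0,0) - (e (1,1) + e (1,2)) + (e (2,0) + e (2,2)),
      (e (0,1) + e (0,2)) + e (1,0) + e (2,1),
      (e (0,1) + e (0,2)) - e (1,0) - e (2,1),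
      (e (0,1) + e (0,2)) + e (1,0) - e (2,1),
      (e (0,1) + e (0,2)) - e (1,0) + e (2,1),
      (e (0,0) + e (0,2)) + e (1,1) + e (2,0),
      (e (0,0) + e (0,2)) - e (1,1) - e (2,0),
      (e (0,0) + e (0,2)) + e (1,1) - e (2,0),
      (e (0,0) + e (0,2)) - e (1,1) + e (2,0),
      e (0,1) + (e (1,0) + e (1,2)) + (e (2,1) + e (2,2)),
      e (0,1) - (e (1,0) + e (1,2)) - (e (2,1) + e (2,2)),
      e (0,1) + (e (1,0) + e (1,2)) - (e (2,1) + e (2,2)),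
      e (0,1) - (e (1,0) + e (1,2)) + (e (2,1) + e (2,2)),
      (e (0,1) - e (0,0)) + e (1,2) + (e (2,0) + e (2,1) + e (2,2)),
      (e (0,1) - e (0,0)) - e (1,2) - (e (2,0) + e (2,1) + e (2,2)),
      (e (0,1) - e (0,0)) + e (1,2) - (e (2,0) + e (2,1) + e (2,2)),
      (e (0,1) - e (0,0)) - e (1,2) + (e (2,0) + e (2,1) + e (2,2))], ?_⟩
  have h24 : (C q : MvPolynomial (Fin 3 × Fin 3) k) * C (24 : k) = 1 := by
    rw [← C_mul, hq, inv_mul_cancel₀ (by norm_num : (24:k) ≠ 0), C_1]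
  have hC24 : (C (24 : k) : MvPolynomial (Fin 3 × Fin 3) k) = 24 := by
    exact map_ofNat C 24
  calc det3 k = C q * (C (24 : k) * det3 k) := by rw [← mul_assoc, h24, one_mul]
    _ = _ := by
        rw [hC24, det3_eq k]
        simp only [Fin.sum_univ_succ, Fin.sum_univ_zero, Matrix.cons_val_zero,
          Matrix.cons_val_succ, linForm_add, linForm_sub, linForm_e, map_neg, add_zero]
        ring
end
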